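/- arXiv:2509.08938 — 2 statements merged into one kernel-verified Lean document; each statement's English description precedes it below -/
import Mathlib

section
/- Let X be a real random variable with 𝔼[e^{2μX}] well-defined for all μ ≥ 0, |X| ≤ 1 almost surely, 𝔼[X] < 0, and ℙ[X > 0] > 0. Then there exists a unique μ > 0 such that 𝔼[e^{2μX}] = 1. -/
/-! Let `φ t = 𝔼[exp (t X)]` be the moment generating function. Then `φ 0 = 1` and
`φ' 0 = 𝔼[X] < 0`, so `φ < 1` just to the right of `0`, while `φ t ≥ t 𝔼[max X 0] → ∞` because
`X > 0` with positive probability; the intermediate value theorem gives a root `t > 0`.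
As `X` is not a.s. zero, `φ` is strictly convex and so takes the value `φ 0` at most once on
`(0, ∞)`. The `μ` of the theorem is `t / 2`. -/

open MeasureTheory ProbabilityTheory Filter Topology Set Real

lemma HasDerivAt.eventually_lt_of_neg {f : ℝ → ℝ} {f' x : ℝ} (hf : HasDerivAt f f' x)
    (hf' : f' < 0) : ∀ᶠ y in 𝓝[>] x, f y < f x := by
  filter_upwards [hf.hasDerivWithinAt.limsup_slope_le' (s := Ioi x) (lt_irrefl x) hf',
    self_mem_nhdsWithin] with y hslope hxy
  rwa [slope_def_field, div_lt_iff₀ (sub_pos.2 hxy), zero_mul, sub_neg] at hslope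

lemma StrictConvexOn.eq_of_apply_eq_of_lt {f : ℝ → ℝ} {s : Set ℝ} (hf : StrictConvexOn ℝ s f)
    {x y z : ℝ} (hx : x ∈ s) (hy : y ∈ s) (hz : z ∈ s) (hxy : x < y) (hxz : x < z)
    (hfy : f y = f x) (hfz : f z = f x) : y = z := by
  have dips : ∀ {y z}, z ∈ s → x < y → y < z → f z = f x → f y < f x := by
    intro y z hz hxy hyz hfz
    simpa [hfz] using hf.lt_on_openSegment hx hz (hxy.trans hyz).ne
      (Ioo_subset_openSegment ⟨hxy, hyz⟩)
  rcases lt_trichotomy y z with hyz | hyz | hyz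
  · exact absurd hfy (dips hz hxy hyz hfz).ne
  · exact hyz
  · exact absurd hfz (dips hy hxz hyz hfy).ne

lemma convexOn_exp_mul_const (x : ℝ) : ConvexOn ℝ univ fun t => exp (t * x) :=
  ⟨convex_univ, fun s _ t _ a b ha hb hab => by
    simpa only [smul_eq_mul, add_mul, mul_assoc] using
      convexOn_exp.2 (mem_univ (s * x)) (mem_univ (t * x)) ha hb hab⟩

lemma strictConvexOn_exp_mul_const {x : ℝ} (hx : x ≠ 0) :
    StrictConvexOn ℝ univ fun t => exp (t * x) :=
  ⟨convex_univ, fun s _ t _ hst a b ha hb hab => by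
    simpa only [smul_eq_mul, add_mul, mul_assoc] using
      strictConvexOn_exp.2 (mem_univ (s * x)) (mem_univ (t * x))
        ((mul_left_injective₀ hx).ne hst) ha hb hab⟩

section

variable {Ω : Type*} [MeasurableSpace Ω] {μ : Measure Ω}

lemma integral_lt_integral_of_ae_le_of_measure_setOf_lt_ne_zero {f g : Ω → ℝ}
    (hf : Integrable f μ) (hg : Integrable g μ) (hle : f ≤ᵐ[μ] g)
    (hlt : μ {ω | f ω < g ω} ≠ 0) : ∫ ω, f ω ∂μ < ∫ ω, g ω ∂μ := by
  rw [← sub_pos, ← integral_sub hg hf,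
    integral_pos_iff_support_of_nonneg_ae (hle.mono fun _ => sub_nonneg.2) (hg.sub hf)]
  exact pos_iff_ne_zero.2 (mt (measure_mono_null fun ω hω => (sub_pos.2 hω).ne') hlt)

variable {X : Ω → ℝ}

lemma strictConvexOn_mgf (hX : μ {ω | X ω ≠ 0} ≠ 0) :
    StrictConvexOn ℝ (integrableExpSet X μ) (mgf X μ) := by
  refine ⟨convex_integrableExpSet, fun s hs t ht hst a b ha hb hab => ?_⟩
  have hcombo : Integrable (fun ω => a * exp (s * X ω) + b * exp (t * X ω)) μ :=
    (hs.const_mul a).add (ht.const_mul b)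
  calc mgf X μ (a • s + b • t)
      < ∫ ω, a * exp (s * X ω) + b * exp (t * X ω) ∂μ :=
        integral_lt_integral_of_ae_le_of_measure_setOf_lt_ne_zero
          (convex_integrableExpSet hs ht ha.le hb.le hab) hcombo
          (ae_of_all _ fun ω => (convexOn_exp_mul_const (X ω)).2 trivial trivial ha.le hb.le hab)
          fun h => hX (measure_mono_null
            (fun _ hω => (strictConvexOn_exp_mul_const hω).2 trivial trivial hst ha hb hab) h)
    _ = a • mgf X μ s + b • mgf X μ t := by
        rw [integral_add (hs.const_mul a) (ht.const_mul b), integral_const_mul,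
          integral_const_mul]
        rfl

lemma eventually_mgf_lt_one [IsProbabilityMeasure μ] (h0 : 0 ∈ interior (integrableExpSet X μ))
    (hX : μ[X] < 0) : ∀ᶠ t in 𝓝[>] 0, mgf X μ t < 1 := by
  simpa [mgf_zero] using (hasDerivAt_mgf h0).eventually_lt_of_neg (by simpa using hX)

lemma mul_integral_max_zero_le_mgf {t : ℝ} (hX : Integrable X μ) (ht : 0 ≤ t)
    (h_int : Integrable (fun ω => exp (t * X ω)) μ) :
    t * ∫ ω, max (X ω) 0 ∂μ ≤ mgf X μ t := by
  rw [← integral_const_mul]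
  refine integral_mono (hX.pos_part.const_mul t) h_int fun ω => ?_
  rw [mul_max_of_nonneg _ _ ht, mul_zero]
  exact max_le ((le_add_of_nonneg_right zero_le_one).trans (add_one_le_exp _)) (exp_pos _).le

lemma tendsto_mgf_atTop (hX : Integrable X μ) (h_int : ∀ t, Integrable (fun ω => exp (t * X ω)) μ)
    (hpos : μ {ω | 0 < X ω} ≠ 0) : Tendsto (mgf X μ) atTop atTop := by
  have hc : 0 < ∫ ω, max (X ω) 0 ∂μ := by
    rw [integral_pos_iff_support_of_nonneg (f := fun ω => max (X ω) 0)
      (fun _ => le_max_right _ _) hX.pos_part]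
    convert pos_iff_ne_zero.2 hpos using 3
    ext ω
    simp
  refine tendsto_atTop_mono' _ ?_ (tendsto_id.atTop_mul_const hc)
  filter_upwards [eventually_ge_atTop 0] with t ht
  exact mul_integral_max_zero_le_mgf hX ht (h_int t)

theorem exists_unique_pos_mgf_eq_one [IsProbabilityMeasure μ]
    (h_int : ∀ t, Integrable (fun ω => exp (t * X ω)) μ) (hmean : μ[X] < 0)
    (hpos : μ {ω | 0 < X ω} ≠ 0) : ∃! t, 0 < t ∧ mgf X μ t = 1 := by
  have h_univ : integrableExpSet X μ = univ := eq_univ_of_forall h_int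
  have hX : Integrable X μ := integrable_of_mem_interior_integrableExpSet (by simp [h_univ])
  have hconv : StrictConvexOn ℝ univ (mgf X μ) :=
    h_univ ▸ strictConvexOn_mgf fun h => hpos (measure_mono_null (fun _ hω => hω.ne') h)
  obtain ⟨a, ha1, ha⟩ := ((eventually_mgf_lt_one (by simp [h_univ]) hmean).and
    self_mem_nhdsWithin).exists
  obtain ⟨b, hab, hb1⟩ := ((eventually_gt_atTop a).and
    ((tendsto_mgf_atTop hX h_int hpos).eventually_gt_atTop 1)).exists
  obtain ⟨t, ht, hroot⟩ := intermediate_value_Ioo hab.le (continuous_mgf h_int).continuousOn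
    ⟨ha1, hb1⟩
  refine ⟨t, ⟨ha.trans ht.1, hroot⟩, fun s ⟨hs, hs1⟩ => ?_⟩
  exact hconv.eq_of_apply_eq_of_lt (mem_univ 0) (mem_univ s) (mem_univ t) hs (ha.trans ht.1)
    (by rw [hs1, mgf_zero]) (by rw [hroot, mgf_zero])

end

/-- For a bounded random variable `X` with negative mean and positive probability of being
positive, there is a unique `μ > 0` such that `𝔼[e^{2μX}] = 1`. -/
theorem exists_unique_exponential_root {Ω : Type*} [MeasurableSpace Ω] (P : Measure Ω)
    [IsProbabilityMeasure P] (X : Ω → ℝ) (hX : Measurable X)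
    (hbdd : ∀ᵐ ω ∂P, |X ω| ≤ 1)
    (hmean : (∫ ω, X ω ∂P) < 0)
    (hpos : 0 < P {ω | 0 < X ω}) :
    ∃! μ : ℝ, 0 < μ ∧ (∫ ω, Real.exp (2 * μ * X ω) ∂P) = 1 := by
  have h_int (t : ℝ) : Integrable (fun ω => exp (t * X ω)) P :=
    integrable_exp_mul_of_mem_Icc hX.aemeasurable (hbdd.mono fun _ => abs_le.1)
  obtain ⟨t, ⟨ht, hroot⟩, huniq⟩ := exists_unique_pos_mgf_eq_one h_int hmean hpos.ne'
  refine ⟨t / 2, ⟨half_pos ht, ?_⟩, fun s ⟨hs, hs1⟩ => ?_⟩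
  · change mgf X P (2 * (t / 2)) = 1
    rwa [mul_div_cancel₀ t two_ne_zero]
  · linarith [huniq (2 * s) ⟨by positivity, hs1⟩]
end

section
/- Let X be a real random variable with |X| ≤ 1 a.s., standard deviation σ = 𝔼[(X)²]^{1/2} ≤ 1, mean 𝔼[X] = -μ₀σ² + O(σ³) for a fixed constant μ₀ > 0, and tails ℙ[|X| > s] ≤ K exp(-c s/σ). If μ > 0 satisfies 𝔼[e^{2μX}] = 1 and μ ≤ C₀ for an absolute constant C₀, then μ = μ₀ + O(σ), with implied constants depending only on μ₀, c, K, C₀ and the O(σ³) constant. -/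
/-!
Expanding `𝔼[e^{2μX}]` to third order around `μ = 0`, the equation `𝔼[e^{2μX}] = 1` reads
`2μ(𝔼X + μσ²) = O(μ³ 𝔼|X|³)`, and by the layer-cake formula the exponential tails at scale `σ`
give `𝔼|X|³ = O(σ³)`. So both `𝔼X + μσ²` and `𝔼X + μ₀σ²` are `O(σ³)`, whence
`|μ - μ₀| σ² = O(σ³)`.
-/

open MeasureTheory Set

theorem Real.abs_exp_sub_one_sub_id_sub_sq_div_two_le (x : ℝ) :
    |Real.exp x - 1 - x - x ^ 2 / 2| ≤ |x| ^ 3 * Real.exp |x| := by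
  have h := Complex.norm_exp_sub_sum_le_norm_mul_exp x 3
  simp only [Finset.sum_range_succ, Finset.sum_range_zero, Complex.norm_real,
    Real.norm_eq_abs] at h
  convert h using 1
  rw [← Real.norm_eq_abs, ← Complex.norm_real]
  norm_num [Nat.factorial, ← Complex.ofReal_exp]
  ring_nf

theorem integral_abs_rpow_le_of_tail_le {α : Type*} [MeasurableSpace α] {μ : Measure α}
    {f : α → ℝ} (hf : AEMeasurable f μ) {K r p : ℝ} (hK : 0 ≤ K) (hr : 0 < r) (hp : 0 < p)
    (htail : ∀ t > 0, μ {x | t < |f x|} ≤ ENNReal.ofReal (K * Real.exp (-(r * t)))) :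
    ∫ x, |f x| ^ p ∂μ ≤ K * Real.Gamma (p + 1) / r ^ p := by
  have hdens : IntegrableOn (fun t : ℝ ↦ K * (t ^ (p - 1) * Real.exp (-(r * t)))) (Ioi 0) := by
    have := integrableOn_rpow_mul_exp_neg_mul_rpow (s := p - 1) (by linarith) one_pos hr
    simp only [Real.rpow_one, neg_mul] at this
    exact this.const_mul K
  have hlayer : ∫⁻ x, ENNReal.ofReal (|f x| ^ p) ∂μ
      ≤ ENNReal.ofReal p * ENNReal.ofReal (K * ((1 / r) ^ p * Real.Gamma p)) := by
    rw [lintegral_rpow_eq_lintegral_meas_lt_mul μ (ae_of_all _ fun x ↦ abs_nonneg (f x))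
      hf.abs hp, ← Real.integral_rpow_mul_exp_neg_mul_Ioi hp hr, ← integral_const_mul,
      ofReal_integral_eq_lintegral_ofReal hdens]
    · refine mul_le_mul_right (setLIntegral_mono' measurableSet_Ioi fun t ht ↦ ?_) _
      rw [show K * (t ^ (p - 1) * Real.exp (-(r * t))) = K * Real.exp (-(r * t)) * t ^ (p - 1) by
        ring, ENNReal.ofReal_mul (by positivity)]
      gcongr
      exact htail t ht
    · exact (ae_restrict_iff' measurableSet_Ioi).2 (ae_of_all _ fun t (ht : 0 < t) ↦ by positivity)
  rw [integral_eq_lintegral_of_nonneg_ae (ae_of_all _ fun x ↦ by positivity)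
    (hf.abs.pow_const p).aestronglyMeasurable]
  refine ENNReal.toReal_le_of_le_ofReal (by positivity) (hlayer.trans_eq ?_)
  rw [← ENNReal.ofReal_mul hp.le, Real.Gamma_add_one hp.ne', Real.div_rpow zero_le_one hr.le,
    Real.one_rpow]
  congr 1
  field_simp

theorem abs_integral_exp_mul_sub_quadratic_le {Ω : Type*} [MeasurableSpace Ω] {P : Measure Ω}
    [IsProbabilityMeasure P] {X : Ω → ℝ} (hX : AEMeasurable X P) {M : ℝ}
    (hM : ∀ᵐ ω ∂P, |X ω| ≤ M) (a : ℝ) :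
    |∫ ω, Real.exp (a * X ω) ∂P - 1 - a * ∫ ω, X ω ∂P - a ^ 2 / 2 * ∫ ω, X ω ^ 2 ∂P|
      ≤ |a| ^ 3 * Real.exp (|a| * M) * ∫ ω, |X ω| ^ 3 ∂P := by
  have hpow (n : ℕ) : Integrable (fun ω ↦ X ω ^ n) P :=
    .of_bound (hX.pow_const n).aestronglyMeasurable (M ^ n) <| hM.mono fun ω hω ↦ by
      simpa [abs_pow] using pow_le_pow_left₀ (abs_nonneg _) hω n
  have hexp : Integrable (fun ω ↦ Real.exp (a * X ω)) P :=
    .of_bound (hX.const_mul a).exp.aestronglyMeasurable (Real.exp (|a| * M)) <|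
      hM.mono fun ω hω ↦ by
        rw [Real.norm_eq_abs, Real.abs_exp, Real.exp_le_exp]
        exact (le_abs_self _).trans (by rw [abs_mul]; gcongr)
  have hX1 : Integrable X P := by simpa using hpow 1
  have h₀ : Integrable (fun ω ↦ Real.exp (a * X ω) - 1) P := hexp.sub (integrable_const 1)
  have h₁ : Integrable (fun ω ↦ Real.exp (a * X ω) - 1 - a * X ω) P := h₀.sub (hX1.const_mul a)
  have h₂ := (hpow 2).const_mul (a ^ 2 / 2)
  have hlin : ∫ ω, Real.exp (a * X ω) ∂P - 1 - a * ∫ ω, X ω ∂P - a ^ 2 / 2 * ∫ ω, X ω ^ 2 ∂P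
      = ∫ ω, (Real.exp (a * X ω) - 1 - a * X ω - a ^ 2 / 2 * X ω ^ 2) ∂P := by
    rw [integral_sub h₁ h₂, integral_sub h₀ (hX1.const_mul a),
      integral_sub hexp (integrable_const _),
      integral_const_mul, integral_const_mul, integral_const, probReal_univ, one_smul]
  have htaylor : ∀ᵐ ω ∂P, |Real.exp (a * X ω) - 1 - a * X ω - a ^ 2 / 2 * X ω ^ 2|
      ≤ |a| ^ 3 * Real.exp (|a| * M) * |X ω| ^ 3 := hM.mono fun ω hω ↦ by
    calc _ = |Real.exp (a * X ω) - 1 - a * X ω - (a * X ω) ^ 2 / 2| := by ring_nf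
      _ ≤ |a * X ω| ^ 3 * Real.exp |a * X ω| := Real.abs_exp_sub_one_sub_id_sub_sq_div_two_le _
      _ ≤ |a * X ω| ^ 3 * Real.exp (|a| * M) := by rw [abs_mul]; gcongr
      _ = |a| ^ 3 * Real.exp (|a| * M) * |X ω| ^ 3 := by rw [abs_mul]; ring
  rw [hlin, ← integral_const_mul]
  refine abs_integral_le_integral_abs.trans (integral_mono_ae (h₁.sub h₂).abs ?_ htaylor)
  simpa [abs_pow] using ((hpow 3).abs.const_mul (|a| ^ 3 * Real.exp (|a| * M)))

theorem integral_abs_pow_le_of_tail_le {α : Type*} [MeasurableSpace α] {μ : Measure α}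
    {f : α → ℝ} (hf : AEMeasurable f μ) {K r : ℝ} (hK : 0 ≤ K) (hr : 0 < r) {n : ℕ} (hn : 0 < n)
    (htail : ∀ t > 0, μ {x | t < |f x|} ≤ ENNReal.ofReal (K * Real.exp (-(r * t)))) :
    ∫ x, |f x| ^ n ∂μ ≤ K * n.factorial / r ^ n := by
  simpa [Real.rpow_natCast, Real.Gamma_nat_eq_factorial] using
    integral_abs_rpow_le_of_tail_le hf hK hr (p := n) (by positivity) htail

theorem abs_integral_add_mul_integral_sq_le_of_integral_exp_eq_one {Ω : Type*}
    [MeasurableSpace Ω] {P : Measure Ω} [IsProbabilityMeasure P] {X : Ω → ℝ}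
    (hX : AEMeasurable X P) {M : ℝ} (hM : ∀ᵐ ω ∂P, |X ω| ≤ M) {μ : ℝ} (hμ : 0 < μ)
    (hroot : ∫ ω, Real.exp (2 * μ * X ω) ∂P = 1) :
    |∫ ω, X ω ∂P + μ * ∫ ω, X ω ^ 2 ∂P|
      ≤ 4 * μ ^ 2 * Real.exp (2 * μ * M) * ∫ ω, |X ω| ^ 3 ∂P := by
  have h2μ : 0 < 2 * μ := by positivity
  have h := abs_integral_exp_mul_sub_quadratic_le hX hM (2 * μ)
  rw [hroot, abs_of_pos h2μ, show 1 - 1 - 2 * μ * (∫ ω, X ω ∂P) - (2 * μ) ^ 2 / 2 * ∫ ω, X ω ^ 2 ∂P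
      = -(2 * μ * (∫ ω, X ω ∂P + μ * ∫ ω, X ω ^ 2 ∂P)) by ring, abs_neg, abs_mul,
    abs_of_pos h2μ] at h
  exact le_of_mul_le_mul_left (h.trans_eq (by ring)) h2μ

theorem abs_sub_le_of_abs_add_mul_sq_le {m μ ν s A B : ℝ} (hs : 0 < s)
    (hμ : |m + μ * s ^ 2| ≤ B * s ^ 3) (hν : |m + ν * s ^ 2| ≤ A * s ^ 3) :
    |μ - ν| ≤ (B + A) * s := by
  have h : |μ - ν| * s ^ 2 ≤ (B + A) * s * s ^ 2 := calc
    |μ - ν| * s ^ 2 = |(m + μ * s ^ 2) - (m + ν * s ^ 2)| := by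
      rw [add_sub_add_left_eq_sub, ← sub_mul, abs_mul, abs_of_pos (pow_pos hs 2)]
    _ ≤ |m + μ * s ^ 2| + |m + ν * s ^ 2| := abs_sub _ _
    _ ≤ (B + A) * s * s ^ 2 := by linarith
  exact le_of_mul_le_mul_right h (pow_pos hs 2)

theorem exponential_moment_root_expansion_general (μ₀ c K C₀ A : ℝ)
    (hc : 0 < c) (hK : 0 < K) (hA : 0 < A) :
    ∃ D : ℝ, 0 < D ∧
      ∀ (Ω : Type) [MeasurableSpace Ω] (P : Measure Ω) [IsProbabilityMeasure P]
        (X : Ω → ℝ) (σ μ : ℝ),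
        Measurable X →
        (∀ᵐ ω ∂P, |X ω| ≤ 1) →
        σ = Real.sqrt (∫ ω, X ω ^ 2 ∂P) →
        0 < σ → σ ≤ 1 →
        |(∫ ω, X ω ∂P) + μ₀ * σ ^ 2| ≤ A * σ ^ 3 →
        (∀ s : ℝ, 0 < s → P {ω | s < |X ω|} ≤ ENNReal.ofReal (K * Real.exp (-c * s / σ))) →
        0 < μ → μ ≤ C₀ →
        (∫ ω, Real.exp (2 * μ * X ω) ∂P) = 1 →
        |μ - μ₀| ≤ D * σ := by
  refine ⟨24 * K * C₀ ^ 2 * Real.exp (2 * C₀) / c ^ 3 + A, by positivity, ?_⟩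
  intro Ω _ P _ X σ μ hX hX_le hσ hσ_pos _ hmean htail hμ hμC₀ hroot
  have hsecond : ∫ ω, X ω ^ 2 ∂P = σ ^ 2 := by
    rw [hσ, Real.sq_sqrt (integral_nonneg fun ω ↦ sq_nonneg _)]
  have hthird : ∫ ω, |X ω| ^ 3 ∂P ≤ 6 * K / c ^ 3 * σ ^ 3 := by
    refine (integral_abs_pow_le_of_tail_le hX.aemeasurable hK.le (div_pos hc hσ_pos) three_pos
      fun t ht ↦ by convert htail t ht using 4; ring).trans_eq ?_
    simp only [Nat.factorial, div_pow]
    field_simp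
    norm_num
  have hμ_root : |(∫ ω, X ω ∂P) + μ * σ ^ 2|
      ≤ 24 * K * C₀ ^ 2 * Real.exp (2 * C₀) / c ^ 3 * σ ^ 3 := calc
    _ ≤ 4 * μ ^ 2 * Real.exp (2 * μ * 1) * ∫ ω, |X ω| ^ 3 ∂P := by
      rw [← hsecond]
      exact abs_integral_add_mul_integral_sq_le_of_integral_exp_eq_one hX.aemeasurable hX_le hμ
        hroot
    _ ≤ 4 * C₀ ^ 2 * Real.exp (2 * C₀) * (6 * K / c ^ 3 * σ ^ 3) := by rw [mul_one]; gcongr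
    _ = _ := by ring
  exact abs_sub_le_of_abs_add_mul_sq_le hσ_pos hμ_root hmean

/-- If `X` is bounded by 1, has standard deviation `σ ≤ 1`, mean `-μ₀σ² + O(σ³)`, exponential
tails at scale `σ`, and `μ > 0` bounded satisfies `𝔼[e^{2μX}] = 1`, then `μ = μ₀ + O(σ)`. -/
theorem exponential_moment_root_expansion (μ₀ c K C₀ A : ℝ)
    (hμ₀ : 0 < μ₀) (hc : 0 < c) (hK : 0 < K) (hC₀ : 0 < C₀) (hA : 0 < A) :
    ∃ D : ℝ, 0 < D ∧
      ∀ (Ω : Type) [MeasurableSpace Ω] (P : Measure Ω) [IsProbabilityMeasure P]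
        (X : Ω → ℝ) (σ μ : ℝ),
        Measurable X →
        (∀ᵐ ω ∂P, |X ω| ≤ 1) →
        σ = Real.sqrt (∫ ω, X ω ^ 2 ∂P) →
        0 < σ → σ ≤ 1 →
        |(∫ ω, X ω ∂P) + μ₀ * σ ^ 2| ≤ A * σ ^ 3 →
        (∀ s : ℝ, 0 < s → P {ω | s < |X ω|} ≤ ENNReal.ofReal (K * Real.exp (-c * s / σ))) →
        0 < μ → μ ≤ C₀ →
        (∫ ω, Real.exp (2 * μ * X ω) ∂P) = 1 →
        |μ - μ₀| ≤ D * σ :=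
  exponential_moment_root_expansion_general μ₀ c K C₀ A hc hK hA
end
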